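/- arXiv:2101.02423 — 4 statements merged into one kernel-verified Lean document; each statement's English description precedes it below -/
import Mathlib

section
/- Let V be a nonnegative random variable with density f and cdf F, and let h : [0,∞) → [0,∞) be continuous with E[∫₀^V |h(v)| dv] < ∞. Then E[ψ(V)·h(V)] = E[∫₀^V v dh(v)], where ψ(v) = v − (1−F(v))/f(v) and the inner integral is a Lebesgue–Stieltjes integral with respect to h. -/
/-!
Integration by parts gives `∫_{(0,v]} x dh(x) = v h(v) - ∫_0^v h` for `v ≥ 0`; in particular
`0 ≤ ∫_0^v h ≤ v h(v)`, so `E[∫_0^V h]` is finite. The hazard term `(1 - F)/f · h` integrated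
against `dP = f dv` loses its denominator, leaving `∫_0^∞ P(V ≥ t) h(t) dt`, which is
`E[∫_0^V h]` by the layer-cake formula. Subtracting this from `E[V h(V)]` gives the claim.
-/

open MeasureTheory Set

namespace StieltjesFunction

variable (h : StieltjesFunction ℝ)

lemma measureReal_Icc_of_continuous (hcont : Continuous h) {a b : ℝ} (hab : a ≤ b) :
    h.measure.real (Icc a b) = h b - h a := by
  rw [measureReal_def, h.measure_Icc, hcont.continuousWithinAt.leftLim_eq,
    ENNReal.toReal_ofReal (sub_nonneg.2 (h.mono hab))]

/-- Integration by parts, through the layer-cake formula: the points of `(0, v]` above a level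
`t ∈ (0, v]` form `[t, v]`, of `dh`-measure `h v - h t`. -/
theorem setIntegral_Ioc_id_eq_mul_sub_intervalIntegral (hcont : Continuous h) {v : ℝ}
    (hv : 0 ≤ v) :
    ∫ x in Ioc 0 v, x ∂h.measure = v * h v - ∫ t in 0..v, h t := by
  have hid : IntegrableOn (fun x => x) (Ioc 0 v) h.measure := continuous_id.integrableOn_Ioc
  have hlayer :
      ∀ t ∈ Ioc 0 v, (h.measure.restrict (Ioc 0 v)).real {x | t ≤ x} = h v - h t := by
    intro t ht
    change (h.measure.restrict (Ioc 0 v)).real (Ici t) = _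
    rw [measureReal_restrict_apply measurableSet_Ici]
    have : Ici t ∩ Ioc 0 v = Icc t v := by
      ext x; simp only [mem_inter_iff, mem_Ici, mem_Ioc, mem_Icc]
      constructor
      · rintro ⟨htx, -, hxv⟩; exact ⟨htx, hxv⟩
      · rintro ⟨htx, hxv⟩; exact ⟨htx, ht.1.trans_le htx, hxv⟩
    rw [this, h.measureReal_Icc_of_continuous hcont ht.2]
  rw [hid.integral_eq_integral_Ioc_meas_le (M := v)
      (ae_restrict_of_forall_mem measurableSet_Ioc fun x hx => hx.1.le)
      (ae_restrict_of_forall_mem measurableSet_Ioc fun x hx => hx.2),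
    setIntegral_congr_fun measurableSet_Ioc hlayer,
    integral_sub continuous_const.integrableOn_Ioc hcont.integrableOn_Ioc, setIntegral_const,
    Real.volume_real_Ioc_of_le hv, intervalIntegral.integral_of_le hv, smul_eq_mul, sub_zero]

end StieltjesFunction

lemma ae_le_of_withDensity_restrict_Ici {μ : Measure ℝ} {a : ℝ} (ρ : ℝ → ENNReal) :
    ∀ᵐ v ∂(μ.restrict (Ici a)).withDensity ρ, a ≤ v :=
  (withDensity_absolutelyContinuous _ ρ).ae_le (ae_restrict_mem measurableSet_Ici)

lemma lintegral_ofReal_div_withDensity_ofReal {α : Type*} [MeasurableSpace α] {μ : Measure α}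
    {f : α → ℝ} (hfm : Measurable f) (hfpos : ∀ᵐ x ∂μ, 0 < f x) (u : α → ℝ) :
    ∫⁻ x, ENNReal.ofReal (u x / f x) ∂μ.withDensity (fun x => ENNReal.ofReal (f x))
      = ∫⁻ x, ENNReal.ofReal (u x) ∂μ := by
  rw [lintegral_withDensity_eq_lintegral_mul_non_measurable _ hfm.ennreal_ofReal
    (ae_of_all _ fun _ => ENNReal.ofReal_lt_top)]
  refine lintegral_congr_ae (hfpos.mono fun x hx => ?_)
  rw [Pi.mul_apply, ← ENNReal.ofReal_mul hx.le, mul_div_cancel₀ _ hx.ne']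

lemma one_sub_measureReal_Iic {P : Measure ℝ} [IsProbabilityMeasure P] [NullSingletonClass P]
    (t : ℝ) : 1 - P.real (Iic t) = P.real (Ici t) := by
  rw [← probReal_compl_eq_one_sub measurableSet_Iic, compl_Iic, measureReal_congr Ioi_ae_eq_Ici]

section Tail

variable {P : Measure ℝ} [IsProbabilityMeasure P] {f g : ℝ → ℝ}

theorem integrable_tail_div_density_mul_and_integral_eq
    (hP : P = (volume.restrict (Ici 0)).withDensity fun v => ENNReal.ofReal (f v))
    (hfm : Measurable f) (hfpos : ∀ v ∈ Ici (0 : ℝ), 0 < f v)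
    (hg : Continuous g) (hg0 : ∀ v ∈ Ici (0 : ℝ), 0 ≤ g v)
    (hG : Integrable (fun v => ∫ t in 0..v, g t) P) :
    Integrable (fun v => P.real (Ici v) / f v * g v) P ∧
      ∫ v, P.real (Ici v) / f v * g v ∂P = ∫ v, (∫ t in 0..v, g t) ∂P := by
  have hP0 : ∀ᵐ v ∂P, 0 ≤ v := hP ▸ ae_le_of_withDensity_restrict_Ici _
  have : NullSingletonClass P := hP ▸ inferInstance
  have hlin : ∫⁻ v, ENNReal.ofReal (P.real (Ici v) / f v * g v) ∂P
      = ∫⁻ v, ENNReal.ofReal (∫ t in 0..v, g t) ∂P := by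
    calc ∫⁻ v, ENNReal.ofReal (P.real (Ici v) / f v * g v) ∂P
        = ∫⁻ v in Ici 0, ENNReal.ofReal (P.real (Ici v) * g v) := by
          have hdiv := lintegral_ofReal_div_withDensity_ofReal (μ := volume.restrict (Ici 0)) hfm
            (ae_restrict_of_forall_mem measurableSet_Ici hfpos) fun v => P.real (Ici v) * g v
          rw [← hP] at hdiv
          simpa only [div_mul_eq_mul_div] using hdiv
      _ = ∫⁻ t in Ioi 0, P (Ici t) * ENNReal.ofReal (g t) := by
          rw [← restrict_Ioi_eq_restrict_Ici]
          refine setLIntegral_congr_fun measurableSet_Ioi fun t _ => ?_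
          rw [ENNReal.ofReal_mul measureReal_nonneg, ofReal_measureReal]
      _ = ∫⁻ v, ENNReal.ofReal (∫ t in 0..v, g t) ∂P :=
          (lintegral_comp_eq_lintegral_meas_le_mul P hP0 aemeasurable_id
            (fun t _ => hg.intervalIntegrable 0 t)
            (ae_restrict_of_forall_mem measurableSet_Ioi fun t ht =>
              hg0 t (Ioi_subset_Ici_self ht))).symm
  have hnn : 0 ≤ᵐ[P] fun v => P.real (Ici v) / f v * g v :=
    hP0.mono fun v hv => mul_nonneg (div_nonneg measureReal_nonneg (hfpos v hv).le) (hg0 v hv)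
  have hGnn : 0 ≤ᵐ[P] fun v => ∫ t in 0..v, g t :=
    hP0.mono fun v hv => intervalIntegral.integral_nonneg hv fun t ht => hg0 t ht.1
  have hmeas : AEStronglyMeasurable (fun v => P.real (Ici v) / f v * g v) P :=
    (((Antitone.measurable fun a b hab => measureReal_mono (Ici_subset_Ici.2 hab)).div hfm).mul
      hg.measurable).aestronglyMeasurable
  have hint : Integrable (fun v => P.real (Ici v) / f v * g v) P :=
    ⟨hmeas, (hasFiniteIntegral_iff_ofReal hnn).2 (hlin ▸ hG.lintegral_lt_top)⟩
  refine ⟨hint, ?_⟩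
  rw [integral_eq_lintegral_of_nonneg_ae hnn hmeas, integral_eq_lintegral_of_nonneg_ae hGnn hG.1,
    hlin]

end Tail

theorem stmt_4_general (f : ℝ → ℝ) (P : Measure ℝ) [IsProbabilityMeasure P]
    (hP : P = (volume.restrict (Set.Ici (0 : ℝ))).withDensity (fun v => ENNReal.ofReal (f v)))
    (hfm : Measurable f) (hfpos : ∀ v ∈ Set.Ici (0 : ℝ), 0 < f v)
    (h : StieltjesFunction ℝ) (hcont : Continuous h)
    (hnonneg : ∀ v ∈ Set.Ici (0 : ℝ), 0 ≤ h v)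
    (hVh : Integrable (fun v => v * h v) P) :
    ∫ v, (v - (1 - (P (Set.Iic v)).toReal) / f v) * h v ∂P
      = ∫ v, (∫ x in Set.Ioc (0 : ℝ) v, x ∂h.measure) ∂P := by
  have hP0 : ∀ᵐ v ∂P, 0 ≤ v := hP ▸ ae_le_of_withDensity_restrict_Ici _
  have : NullSingletonClass P := hP ▸ inferInstance
  have hparts : ∀ᵐ v ∂P, ∫ x in Ioc 0 v, x ∂h.measure = v * h v - ∫ t in 0..v, h t :=
    hP0.mono fun v hv => h.setIntegral_Ioc_id_eq_mul_sub_intervalIntegral hcont hv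
  have hH : Integrable (fun v => ∫ t in 0..v, h t) P := by
    refine hVh.mono' (intervalIntegral.continuous_primitive
      (fun a b => hcont.intervalIntegrable a b) 0).aestronglyMeasurable ?_
    filter_upwards [hP0, hparts] with v hv hvparts
    have hHnn : 0 ≤ ∫ t in 0..v, h t :=
      intervalIntegral.integral_nonneg hv fun t ht => hnonneg t ht.1
    rw [Real.norm_of_nonneg hHnn]
    linarith [setIntegral_nonneg (μ := h.measure) measurableSet_Ioc
      fun x (hx : x ∈ Ioc 0 v) => hx.1.le]
  obtain ⟨hT, hTeq⟩ :=
    integrable_tail_div_density_mul_and_integral_eq hP hfm hfpos hcont hnonneg hH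
  simp_rw [← measureReal_def, one_sub_measureReal_Iic, sub_mul]
  rw [integral_sub hVh hT, hTeq, ← integral_sub hVh hH]
  exact integral_congr_ae (hparts.mono fun v hv => hv.symm)

/-- Covariance identity between the virtual valuation `ψ(v) = v − (1−F(v))/f(v)` and a
continuous nonnegative transformation `h` (a Stieltjes function, so that the
Lebesgue–Stieltjes measure `dh` is available):
`E[ψ(V)·h(V)] = E[∫₀^V v dh(v)]`. -/
theorem stmt_4 (f : ℝ → ℝ) (P : Measure ℝ) [IsProbabilityMeasure P]
    (hP : P = (volume.restrict (Set.Ici (0 : ℝ))).withDensity (fun v => ENNReal.ofReal (f v)))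
    (hfm : Measurable f) (hfpos : ∀ v ∈ Set.Ici (0 : ℝ), 0 < f v)
    (h : StieltjesFunction ℝ) (hcont : Continuous h)
    (hnonneg : ∀ v ∈ Set.Ici (0 : ℝ), 0 ≤ h v)
    (hint : Integrable (fun v => ∫ x in Set.Ioc (0 : ℝ) v, |h x|) P)
    (hVh : Integrable (fun v => v * h v) P) :
    ∫ v, (v - (1 - (P (Set.Iic v)).toReal) / f v) * h v ∂P
      = ∫ v, (∫ x in Set.Ioc (0 : ℝ) v, x ∂h.measure) ∂P :=
  stmt_4_general f P hP hfm hfpos h hcont hnonneg hVh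
end

section
/- Let V be a nonnegative random variable with density f and cdf F, and let h : [0,∞) → ℝ be continuous and strictly increasing with E[∫₀^V h(v) dv] < ∞ and V not a.s. 0. Then E[ψ(V)·h(V)] > 0, where ψ(v) = v − (1−F(v))/f(v). -/
open MeasureTheory

lemma absBound (h : ℝ → ℝ) (hcont : Continuous h)
    (hmono : StrictMonoOn h (Set.Ici (0:ℝ))) :
    ∃ C : ℝ, 0 ≤ C ∧ ∀ x : ℝ, 0 ≤ x →
      (∫ t in Set.Ico 0 x, |h t|) ≤ |∫ t in Set.Ioc 0 x, h t| + C := by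
  have hIh : ∀ a b : ℝ, IntegrableOn h (Set.Ico a b) :=
    fun a b => (hcont.integrableOn_Icc).mono_set Set.Ico_subset_Icc_self
  have hIabs : ∀ a b : ℝ, IntegrableOn (fun t => |h t|) (Set.Ico a b) :=
    fun a b => (hcont.abs.integrableOn_Icc).mono_set Set.Ico_subset_Icc_self
  have hIco_Ioc : ∀ x : ℝ, (∫ t in Set.Ico 0 x, h t) = ∫ t in Set.Ioc 0 x, h t := by
    intro x; rw [integral_Ico_eq_integral_Ioo, integral_Ioc_eq_integral_Ioo]
  by_cases hc : ∃ c, 0 ≤ c ∧ 0 ≤ h c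
  · obtain ⟨c, hc0, hhc⟩ := hc
    set np : ℝ → ℝ := fun t => max (-h t) 0 with hnp
    have hnpc : Continuous np := hcont.neg.max continuous_const
    have hnpnn : ∀ t, 0 ≤ np t := fun t => le_max_right _ _
    have hInp : ∀ a b : ℝ, IntegrableOn np (Set.Ico a b) :=
      fun a b => (hnpc.integrableOn_Icc).mono_set Set.Ico_subset_Icc_self
    have habs : ∀ t, |h t| = h t + 2 * np t := by
      intro t
      rcases le_or_gt 0 (h t) with ht | ht
      · simp [hnp, abs_of_nonneg ht, max_eq_right (neg_nonpos.mpr ht)]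
      · rw [abs_of_neg ht]
        simp only [hnp, max_eq_left (neg_pos.mpr ht).le]
        ring
    have hnp0 : ∀ t, c ≤ t → np t = 0 := by
      intro t htc
      have : h c ≤ h t := hmono.monotoneOn hc0 (hc0.trans htc) htc
      simp [hnp, max_eq_right, neg_nonpos.mpr (hhc.trans this)]
    refine ⟨2 * ∫ t in Set.Ico 0 c, np t, by positivity, ?_⟩
    intro x hx
    have step1 : (∫ t in Set.Ico 0 x, |h t|)
        = (∫ t in Set.Ico 0 x, h t) + 2 * ∫ t in Set.Ico 0 x, np t := by
      calc (∫ t in Set.Ico 0 x, |h t|) = ∫ t in Set.Ico 0 x, (h t + 2 * np t) := by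
            exact setIntegral_congr_fun measurableSet_Ico (fun t _ => habs t)
        _ = (∫ t in Set.Ico 0 x, h t) + ∫ t in Set.Ico 0 x, 2 * np t :=
            integral_add (hIh 0 x) ((hInp 0 x).const_mul 2)
        _ = (∫ t in Set.Ico 0 x, h t) + 2 * ∫ t in Set.Ico 0 x, np t := by
            rw [integral_const_mul]
    have hIind : Integrable ((Set.Ico (0:ℝ) c).indicator np) volume :=
      (hInp 0 c).integrable_indicator measurableSet_Ico
    have step2 : (∫ t in Set.Ico 0 x, np t) ≤ ∫ t in Set.Ico 0 c, np t := by
      calc (∫ t in Set.Ico 0 x, np t)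
          ≤ ∫ t in Set.Ico 0 x, (Set.Ico (0:ℝ) c).indicator np t := by
            apply setIntegral_mono_on (hInp 0 x) (hIind.integrableOn) measurableSet_Ico
            intro t ht
            by_cases htc : t < c
            · rw [Set.indicator_of_mem (Set.mem_Ico.mpr ⟨(Set.mem_Ico.mp ht).1, htc⟩) np]
            · rw [hnp0 t (not_lt.mp htc)]
              exact Set.indicator_nonneg (fun s _ => hnpnn s) t
        _ ≤ ∫ t, (Set.Ico (0:ℝ) c).indicator np t :=
            setIntegral_le_integral hIind
              (Filter.Eventually.of_forall (Set.indicator_nonneg (fun s _ => hnpnn s)))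
        _ = ∫ t in Set.Ico 0 c, np t := integral_indicator measurableSet_Ico
    calc (∫ t in Set.Ico 0 x, |h t|)
        = (∫ t in Set.Ico 0 x, h t) + 2 * ∫ t in Set.Ico 0 x, np t := step1
      _ ≤ |∫ t in Set.Ioc 0 x, h t| + 2 * ∫ t in Set.Ico 0 c, np t := by
          rw [hIco_Ioc x]
          exact add_le_add (le_abs_self _) (by linarith)
  · push_neg at hc
    refine ⟨0, le_refl _, ?_⟩
    intro x hx
    have : (∫ t in Set.Ico 0 x, |h t|) = ∫ t in Set.Ico 0 x, (fun t => -h t) t := by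
      apply setIntegral_congr_fun measurableSet_Ico
      intro t ht; exact abs_of_neg (hc t ht.1)
    rw [this, integral_neg, hIco_Ioc x, add_zero]
    exact neg_le_abs _

/-- Positive correlation between the virtual valuation and any continuous strictly
increasing transformation: `E[ψ(V)·h(V)] > 0` where `ψ(v) = v − (1−F(v))/f(v)`,
for a nonnegative random variable `V` with density `f`, cdf `F`, `P(V > 0) > 0`. -/
theorem stmt_5 (f : ℝ → ℝ) (P : Measure ℝ) [IsProbabilityMeasure P]
    (hP : P = (volume.restrict (Set.Ici (0 : ℝ))).withDensity (fun v => ENNReal.ofReal (f v)))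
    (hfm : Measurable f) (hfpos : ∀ v ∈ Set.Ici (0 : ℝ), 0 < f v)
    (h : ℝ → ℝ) (hcont : Continuous h) (hmono : StrictMonoOn h (Set.Ici (0 : ℝ)))
    (hint : Integrable (fun v => ∫ x in Set.Ioc (0 : ℝ) v, h x) P)
    (hVh : Integrable (fun v => v * h v) P)
    (hpos : 0 < P (Set.Ioi (0 : ℝ))) :
    0 < ∫ v, (v - (1 - (P (Set.Iic v)).toReal) / f v) * h v ∂P := by
  have hhm : Measurable h := hcont.measurable
  set ν : Measure ℝ := volume.restrict (Set.Ici (0:ℝ)) with hνdef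
  set H : ℝ → ℝ := fun x => ∫ t in Set.Ioc (0:ℝ) x, h t with hHdef
  -- basic facts
  have hGanti : Antitone (fun v : ℝ => (P (Set.Ioi v)).toReal) := by
    intro a b hab
    exact ENNReal.toReal_mono (measure_ne_top P _) (measure_mono (Set.Ioi_subset_Ioi hab))
  have hGm : Measurable fun v : ℝ => (P (Set.Ioi v)).toReal := hGanti.measurable
  have hFG : ∀ v : ℝ, 1 - (P (Set.Iic v)).toReal = (P (Set.Ioi v)).toReal := by
    intro v
    have h1 : P (Set.Ioi v) = 1 - P (Set.Iic v) := by
      rw [← Set.compl_Iic, prob_compl_eq_one_sub measurableSet_Iic]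
    rw [h1, ENNReal.toReal_sub_of_le prob_le_one ENNReal.one_ne_top, ENNReal.toReal_one]
  have hPae : ∀ᵐ v ∂P, v ∈ Set.Ici (0:ℝ) := by
    rw [ae_iff]
    have hset : {v : ℝ | ¬ v ∈ Set.Ici (0:ℝ)} = Set.Iio 0 := by
      ext t; simp [Set.mem_Iio, not_le]
    have hν0 : ν (Set.Iio 0) = 0 := by
      rw [hνdef, Measure.restrict_apply measurableSet_Iio]
      have : Set.Iio (0:ℝ) ∩ Set.Ici 0 = ∅ := by
        ext t
        simp only [Set.mem_inter_iff, Set.mem_Iio, Set.mem_Ici,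
          Set.mem_empty_iff_false, iff_false, not_and, not_le]
        intro h1; linarith
      rw [this]; simp
    rw [hset, hP]
    exact withDensity_absolutelyContinuous _ _ hν0
  have hPae' : ∀ᵐ v ∂ν, v ∈ Set.Ici (0:ℝ) := ae_restrict_mem measurableSet_Ici
  obtain ⟨C, hC0, hCb⟩ := absBound h hcont hmono
  -- the ENNReal-valued kernel
  set L : ℝ × ℝ → ENNReal := fun p => if p.2 < p.1 then ENNReal.ofReal |h p.2| else 0
    with hLdef
  have hLm : Measurable L := by
    apply Measurable.ite (measurableSet_lt measurable_snd measurable_fst)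
    · exact (hhm.comp measurable_snd).abs.ennreal_ofReal
    · exact measurable_const
  -- inner lintegral in v, for x ≥ 0
  have hinner : ∀ x : ℝ, 0 ≤ x →
      (∫⁻ v, L (x, v) ∂ν) = ENNReal.ofReal (∫ t in Set.Ico 0 x, |h t|) := by
    intro x hx
    have e : ∀ v : ℝ, L (x, v)
        = (Set.Iio x).indicator (fun v => ENNReal.ofReal |h v|) v := by
      intro v; simp [hLdef, Set.indicator_apply]
    simp_rw [e]
    rw [lintegral_indicator measurableSet_Iio _, hνdef,
      Measure.restrict_restrict measurableSet_Iio, Set.inter_comm, Set.Ici_inter_Iio]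
    exact (ofReal_integral_eq_lintegral_ofReal
      ((hcont.abs.integrableOn_Icc).mono_set Set.Ico_subset_Icc_self)
      (Filter.Eventually.of_forall fun t => abs_nonneg _)).symm
  -- finiteness of the iterated lintegral
  have hfin : (∫⁻ x, (∫⁻ v, L (x, v) ∂ν) ∂P) < ⊤ := by
    have hbd : ∀ᵐ x ∂P, (∫⁻ v, L (x, v) ∂ν) ≤ ENNReal.ofReal (|H x| + C) := by
      filter_upwards [hPae] with x hx
      rw [hinner x hx]
      exact ENNReal.ofReal_le_ofReal (hCb x hx)
    calc (∫⁻ x, (∫⁻ v, L (x, v) ∂ν) ∂P) ≤ ∫⁻ x, ENNReal.ofReal (|H x| + C) ∂P :=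
          lintegral_mono_ae hbd
      _ = ENNReal.ofReal (∫ x, (|H x| + C) ∂P) := by
          have hI : Integrable (fun x => |H x| + C) P := hint.abs.add (integrable_const C)
          exact (ofReal_integral_eq_lintegral_ofReal hI
            (Filter.Eventually.of_forall fun x => by positivity)).symm
      _ < ⊤ := ENNReal.ofReal_lt_top
  -- Tonelli swap
  have hswap : (∫⁻ v, (∫⁻ x, L (x, v) ∂P) ∂ν) = ∫⁻ x, (∫⁻ v, L (x, v) ∂ν) ∂P := by
    exact (lintegral_lintegral_swap (f := fun x v => L (x, v)) hLm.aemeasurable).symm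
  -- inner lintegral in x
  have hinner2 : ∀ v : ℝ, (∫⁻ x, L (x, v) ∂P) = ENNReal.ofReal |h v| * P (Set.Ioi v) := by
    intro v
    have e : ∀ x : ℝ, L (x, v)
        = (Set.Ioi v).indicator (fun _ => ENNReal.ofReal |h v|) x := by
      intro x; simp [hLdef, Set.indicator_apply, Set.mem_Ioi]
    simp_rw [e]
    rw [lintegral_indicator measurableSet_Ioi _, setLIntegral_const]
  -- integrability of G·h against ν
  have hGhint : Integrable (fun v => (P (Set.Ioi v)).toReal * h v) ν := by
    refine ⟨(hGm.mul hhm).aestronglyMeasurable, ?_⟩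
    rw [hasFiniteIntegral_iff_norm]
    have : ∀ v : ℝ, ENNReal.ofReal ‖(P (Set.Ioi v)).toReal * h v‖
        = ENNReal.ofReal |h v| * P (Set.Ioi v) := by
      intro v
      rw [Real.norm_eq_abs, abs_mul, abs_of_nonneg ENNReal.toReal_nonneg,
        ENNReal.ofReal_mul ENNReal.toReal_nonneg,
        ENNReal.ofReal_toReal (measure_ne_top P _), mul_comm]
    simp_rw [this]
    calc (∫⁻ v, ENNReal.ofReal |h v| * P (Set.Ioi v) ∂ν)
        = ∫⁻ v, (∫⁻ x, L (x, v) ∂P) ∂ν := by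
          refine lintegral_congr fun v => ?_
          rw [hinner2 v]
      _ = ∫⁻ x, (∫⁻ v, L (x, v) ∂ν) ∂P := hswap
      _ < ⊤ := hfin
  -- transfer between P and ν
  have key_iff : ∀ g : ℝ → ℝ, Integrable g P ↔ Integrable (fun v => g v * f v) ν := by
    intro g
    rw [hP, integrable_withDensity_iff hfm.ennreal_ofReal
      (Filter.Eventually.of_forall fun v => ENNReal.ofReal_lt_top)]
    refine integrable_congr ?_
    filter_upwards [hPae'] with v hv
    rw [ENNReal.toReal_ofReal (hfpos v hv).le]
  have key_int : ∀ g : ℝ → ℝ, ∫ v, g v ∂P = ∫ v, g v * f v ∂ν := by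
    intro g
    rw [hP, show (fun v => ENNReal.ofReal (f v)) = fun v => ((f v).toNNReal : ENNReal)
      from rfl, integral_withDensity_eq_integral_smul (f := fun v => (f v).toNNReal)
      (measurable_real_toNNReal.comp hfm)]
    refine integral_congr_ae ?_
    filter_upwards [hPae'] with v hv
    rw [NNReal.smul_def, Real.coe_toNNReal _ (hfpos v hv).le, smul_eq_mul, mul_comm]
  -- integrability of the virtual-valuation correction term
  have hI2 : Integrable (fun v => ((1 - (P (Set.Iic v)).toReal) / f v) * h v) P := by
    rw [key_iff]
    refine hGhint.congr ?_
    filter_upwards [hPae'] with v hv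
    have hfv : (0:ℝ) < f v := hfpos v hv
    rw [hFG v]
    field_simp
  -- the Fubini step
  have hKm : Measurable (Function.uncurry fun (x v : ℝ) => if v < x then h v else 0) := by
    apply Measurable.ite (measurableSet_lt measurable_snd measurable_fst)
    · exact hhm.comp measurable_snd
    · exact measurable_const
  have hKint : Integrable (Function.uncurry fun (x v : ℝ) => if v < x then h v else 0)
      (P.prod ν) := by
    refine ⟨hKm.aestronglyMeasurable, ?_⟩
    rw [hasFiniteIntegral_iff_norm, lintegral_prod _
      (hKm.norm.ennreal_ofReal.aemeasurable)]
    have e : ∀ x v : ℝ, ENNReal.ofReal ‖Function.uncurry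
        (fun (x v : ℝ) => if v < x then h v else 0) (x, v)‖ = L (x, v) := by
      intro x v
      by_cases hvx : v < x <;>
        simp [Function.uncurry, hvx, hLdef, Real.norm_eq_abs]
    simp_rw [e]
    exact hfin
  have hfub : ∫ x, (∫ v, (if v < x then h v else 0) ∂ν) ∂P
      = ∫ v, (∫ x, (if v < x then h v else 0) ∂P) ∂ν :=
    integral_integral_swap hKint
  have hL1 : ∀ x : ℝ, 0 ≤ x → (∫ v, (if v < x then h v else 0) ∂ν) = H x := by
    intro x hx
    have e : (fun v : ℝ => if v < x then h v else 0) = (Set.Iio x).indicator h := by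
      funext v; simp [Set.indicator_apply]
    rw [e, integral_indicator measurableSet_Iio, hνdef,
      Measure.restrict_restrict measurableSet_Iio, Set.inter_comm, Set.Ici_inter_Iio,
      integral_Ico_eq_integral_Ioo, hHdef, ← integral_Ioc_eq_integral_Ioo]
  have hL2 : ∀ v : ℝ, (∫ x, (if v < x then h v else 0) ∂P)
      = (P (Set.Ioi v)).toReal * h v := by
    intro v
    have e : (fun x : ℝ => if v < x then h v else 0)
        = (Set.Ioi v).indicator (fun _ => h v) := by
      funext x; simp [Set.indicator_apply, Set.mem_Ioi]
    rw [e, integral_indicator_const (h v) measurableSet_Ioi, smul_eq_mul, measureReal_def]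
  have hHG : ∫ v, (P (Set.Ioi v)).toReal * h v ∂ν = ∫ x, H x ∂P := by
    calc ∫ v, (P (Set.Ioi v)).toReal * h v ∂ν
        = ∫ v, (∫ x, (if v < x then h v else 0) ∂P) ∂ν := by
          refine integral_congr_ae (Filter.Eventually.of_forall fun v => ?_)
          exact (hL2 v).symm
      _ = ∫ x, (∫ v, (if v < x then h v else 0) ∂ν) ∂P := hfub.symm
      _ = ∫ x, H x ∂P := by
          refine integral_congr_ae ?_
          filter_upwards [hPae] with x hx using hL1 x hx
  -- value of the correction term integral
  have hI2val : ∫ v, ((1 - (P (Set.Iic v)).toReal) / f v) * h v ∂P = ∫ x, H x ∂P := by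
    rw [key_int fun v => ((1 - (P (Set.Iic v)).toReal) / f v) * h v]
    rw [← hHG]
    refine integral_congr_ae ?_
    filter_upwards [hPae'] with v hv
    have hfv : (0:ℝ) < f v := hfpos v hv
    rw [hFG v]
    field_simp
  -- rewrite the goal
  have key : ∫ v, (v - (1 - (P (Set.Iic v)).toReal) / f v) * h v ∂P
      = ∫ v, (v * h v - H v) ∂P := by
    have e1 : ∀ v : ℝ, (v - (1 - (P (Set.Iic v)).toReal) / f v) * h v
        = v * h v - ((1 - (P (Set.Iic v)).toReal) / f v) * h v := fun v => by ring
    simp_rw [e1]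
    rw [integral_sub hVh hI2, hI2val, ← integral_sub hVh hint]
  rw [key]
  -- nonnegativity and strict positivity of the integrand
  have hg0 : ∀ v : ℝ, 0 ≤ v → H v ≤ v * h v := by
    intro v hv
    have hIoc : IntegrableOn h (Set.Ioc 0 v) volume :=
      (hcont.integrableOn_Icc).mono_set Set.Ioc_subset_Icc_self
    have hconst : IntegrableOn (fun _ : ℝ => h v) (Set.Ioc (0:ℝ) v) volume :=
      integrableOn_const measure_Ioc_lt_top.ne
    calc H v ≤ ∫ _t in Set.Ioc (0:ℝ) v, h v := by
          refine setIntegral_mono_on hIoc hconst measurableSet_Ioc fun t ht => ?_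
          have ht' := Set.mem_Ioc.mp ht
          exact hmono.monotoneOn (Set.mem_Ici.mpr ht'.1.le) (Set.mem_Ici.mpr hv) ht'.2
      _ = v * h v := by
          rw [setIntegral_const, measureReal_def, Real.volume_Ioc, ENNReal.toReal_ofReal (by linarith),
            sub_zero, smul_eq_mul]
  have hgpos : ∀ v : ℝ, 0 < v → 0 < v * h v - H v := by
    intro v hv
    have hIoc : IntegrableOn h (Set.Ioc 0 v) volume :=
      (hcont.integrableOn_Icc).mono_set Set.Ioc_subset_Icc_self
    have hconst : IntegrableOn (fun _ : ℝ => h v) (Set.Ioc (0:ℝ) v) volume :=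
      integrableOn_const measure_Ioc_lt_top.ne
    have h1 : v * h v - H v = ∫ t in Set.Ioc (0:ℝ) v, (h v - h t) := by
      rw [integral_sub hconst hIoc, setIntegral_const, measureReal_def, Real.volume_Ioc,
        ENNReal.toReal_ofReal (by linarith), sub_zero, smul_eq_mul]
    have hmid : h (v/2) < h v :=
      hmono (Set.mem_Ici.mpr (by linarith)) (Set.mem_Ici.mpr hv.le) (by linarith)
    have h2 : (0:ℝ) < (v/2) * (h v - h (v/2)) := by nlinarith
    have hIoc2 : IntegrableOn (fun t => h v - h t) (Set.Ioc (0:ℝ) (v/2)) volume := by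
      refine (integrableOn_const measure_Ioc_lt_top.ne).sub
        ((hcont.integrableOn_Icc).mono_set Set.Ioc_subset_Icc_self)
    have h3 : (v/2) * (h v - h (v/2)) ≤ ∫ t in Set.Ioc (0:ℝ) (v/2), (h v - h t) := by
      have : ∫ _t in Set.Ioc (0:ℝ) (v/2), (h v - h (v/2)) = (v/2) * (h v - h (v/2)) := by
        rw [setIntegral_const, measureReal_def, Real.volume_Ioc, ENNReal.toReal_ofReal (by linarith),
          sub_zero, smul_eq_mul]
      rw [← this]
      refine setIntegral_mono_on (integrableOn_const measure_Ioc_lt_top.ne)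
        hIoc2 measurableSet_Ioc fun t ht => ?_
      have ht' := Set.mem_Ioc.mp ht
      have : h t ≤ h (v/2) :=
        hmono.monotoneOn (Set.mem_Ici.mpr ht'.1.le) (Set.mem_Ici.mpr (by linarith)) ht'.2
      linarith
    have h4 : ∫ t in Set.Ioc (0:ℝ) (v/2), (h v - h t)
        ≤ ∫ t in Set.Ioc (0:ℝ) v, (h v - h t) := by
      refine setIntegral_mono_set
        ((integrableOn_const measure_Ioc_lt_top.ne).sub hIoc) ?_ ?_
      · filter_upwards [ae_restrict_mem measurableSet_Ioc] with t ht
        have ht' := Set.mem_Ioc.mp ht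
        have : h t ≤ h v :=
          hmono.monotoneOn (Set.mem_Ici.mpr ht'.1.le) (Set.mem_Ici.mpr hv.le) ht'.2
        simpa using this
      · exact HasSubset.Subset.eventuallyLE (Set.Ioc_subset_Ioc_right (by linarith))
    rw [h1]
    linarith
  have hgint : Integrable (fun v => v * h v - H v) P := hVh.sub hint
  have hnn : 0 ≤ᵐ[P] fun v => v * h v - H v := by
    filter_upwards [hPae] with v hv
    have := hg0 v hv
    simp only [Pi.zero_apply]
    linarith
  rw [integral_pos_iff_support_of_nonneg_ae hnn hgint]
  refine lt_of_lt_of_le hpos (measure_mono fun v hv => ?_)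
  exact Function.mem_support.mpr (hgpos v hv).ne'
end

section
/- Let V be a nonnegative random variable with density f, cdf F, finite second moment, and virtual valuation ψ(v) = v − (1−F(v))/f(v). Then Cov(V, ψ(V)) = E[V·ψ(V)] = (1/2)·E[V²]. -/
open MeasureTheory Set
open scoped ENNReal

/-- `Cov(V, ψ(V)) = E[V·ψ(V)] = (1/2)·E[V²]` where `ψ(v) = v − (1−F(v))/f(v)`,
for a nonnegative random variable `V` with density `f`, cdf `F`, finite second moment. -/
theorem stmt_6 (f : ℝ → ℝ) (P : Measure ℝ) [IsProbabilityMeasure P]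
    (hP : P = (volume.restrict (Set.Ici (0 : ℝ))).withDensity (fun v => ENNReal.ofReal (f v)))
    (hfm : Measurable f) (hfpos : ∀ v ∈ Set.Ici (0 : ℝ), 0 < f v)
    (hmom : Integrable (fun v => v ^ 2) P) :
    ((∫ v, v * (v - (1 - (P (Set.Iic v)).toReal) / f v) ∂P)
        - (∫ v, v ∂P) * ∫ v, (v - (1 - (P (Set.Iic v)).toReal) / f v) ∂P)
      = ∫ v, v * (v - (1 - (P (Set.Iic v)).toReal) / f v) ∂P
    ∧ ∫ v, v * (v - (1 - (P (Set.Iic v)).toReal) / f v) ∂P = (1 / 2) * ∫ v, v ^ 2 ∂P := by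
  -- T v = tail probability
  set T : ℝ → ℝ := fun v => (P (Set.Ioi v)).toReal with hTdef
  -- basic facts
  have hsum : ∀ v : ℝ, 1 - (P (Set.Iic v)).toReal = T v := by
    intro v
    have h := measure_add_measure_compl (μ := P) (measurableSet_Iic (a := v))
    rw [Set.compl_Iic] at h
    have h2 : (P (Set.Iic v)).toReal + (P (Set.Ioi v)).toReal = 1 := by
      rw [← ENNReal.toReal_add (measure_ne_top P _) (measure_ne_top P _), h]; simp
    simp only [hTdef]; linarith
  have hPae : ∀ᵐ v ∂P, v ∈ Set.Ici (0 : ℝ) := by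
    rw [hP]
    exact (withDensity_absolutelyContinuous _ _).ae_le (ae_restrict_mem measurableSet_Ici)
  have hnn : 0 ≤ᵐ[P] fun v => v := hPae.mono fun v hv => hv
  have hTm : Measurable T := by
    apply Measurable.ennreal_toReal
    exact Antitone.measurable (fun a b hab => measure_mono (Set.Ioi_subset_Ioi hab))
  have hTfm : Measurable fun v => T v / f v := hTm.div hfm
  have hgm : Measurable fun v => v * (T v / f v) := measurable_id.mul hTfm
  -- a.e. nonnegativity
  have hTfnn : 0 ≤ᵐ[P] fun v => T v / f v := by
    filter_upwards [hPae] with v hv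
    exact div_nonneg ENNReal.toReal_nonneg (hfpos v hv).le
  have hgnn : 0 ≤ᵐ[P] fun v => v * (T v / f v) := by
    filter_upwards [hPae, hTfnn] with v hv h2
    exact mul_nonneg hv h2
  -- withDensity lintegral transfer
  have hWD : ∀ (h : ℝ → ℝ≥0∞), Measurable h →
      ∫⁻ v, h v ∂P = ∫⁻ v in Set.Ici (0:ℝ), ENNReal.ofReal (f v) * h v := by
    intro h hm
    rw [hP, lintegral_withDensity_eq_lintegral_mul _ hfm.ennreal_ofReal hm]
    rfl
  -- key: lintegral of ofReal (v * (T v / f v)) over P equals tail lintegral with weight t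
  have key2 : ∫⁻ v, ENNReal.ofReal (v * (T v / f v)) ∂P
      = ∫⁻ t in Set.Ioi (0:ℝ), P (Set.Ioi t) * ENNReal.ofReal t := by
    rw [hWD _ (hgm.ennreal_ofReal)]
    have hIci : ∫⁻ v in Set.Ici (0:ℝ), ENNReal.ofReal (f v) * ENNReal.ofReal (v * (T v / f v))
        = ∫⁻ v in Set.Ici (0:ℝ), P (Set.Ioi v) * ENNReal.ofReal v := by
      apply setLIntegral_congr_fun measurableSet_Ici
      intro v hv
      beta_reduce
      have hfv := hfpos v hv
      rw [← ENNReal.ofReal_mul hfv.le]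
      have : f v * (v * (T v / f v)) = v * T v := by field_simp
      rw [this, ENNReal.ofReal_mul hv, hTdef, ENNReal.ofReal_toReal (measure_ne_top P _),
        mul_comm]
    rw [hIci]
    exact setLIntegral_congr (Ioi_ae_eq_Ici (μ := volume) (a := (0:ℝ))).symm
  have key1 : ∫⁻ v, ENNReal.ofReal (T v / f v) ∂P
      = ∫⁻ t in Set.Ioi (0:ℝ), P (Set.Ioi t) := by
    rw [hWD _ (hTfm.ennreal_ofReal)]
    have hIci : ∫⁻ v in Set.Ici (0:ℝ), ENNReal.ofReal (f v) * ENNReal.ofReal (T v / f v)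
        = ∫⁻ v in Set.Ici (0:ℝ), P (Set.Ioi v) := by
      apply setLIntegral_congr_fun measurableSet_Ici
      intro v hv
      beta_reduce
      have hfv := hfpos v hv
      rw [← ENNReal.ofReal_mul hfv.le]
      have : f v * (T v / f v) = T v := by field_simp
      rw [this, hTdef, ENNReal.ofReal_toReal (measure_ne_top P _)]
    rw [hIci]
    exact setLIntegral_congr (Ioi_ae_eq_Ici (μ := volume) (a := (0:ℝ))).symm
  -- layercake
  have lc1 : ∫⁻ x, ENNReal.ofReal x ∂P = ∫⁻ t in Set.Ioi (0:ℝ), P (Set.Ioi t) := by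
    rw [lintegral_eq_lintegral_meas_lt P hnn measurable_id.aemeasurable]; rfl
  have lc2 : ∫⁻ x, ENNReal.ofReal (x ^ 2 / 2) ∂P
      = ∫⁻ t in Set.Ioi (0:ℝ), P (Set.Ioi t) * ENNReal.ofReal t := by
    have h := lintegral_comp_eq_lintegral_meas_lt_mul P (f := fun v => v) (g := fun t => t) hnn
      measurable_id.aemeasurable (fun t _ => (continuous_id.intervalIntegrable 0 t))
      (Filter.Eventually.mono (ae_restrict_mem measurableSet_Ioi) fun t ht => le_of_lt ht)
    simp only [integral_id] at h
    convert h using 3 with x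
    · norm_num
    · rfl
  -- finiteness
  have hI2fin : ∫⁻ x, ENNReal.ofReal (x ^ 2) ∂P < ⊤ := hmom.lintegral_lt_top
  have hhalf : ∫⁻ x, ENNReal.ofReal (x ^ 2 / 2) ∂P
      = ENNReal.ofReal (1/2) * ∫⁻ x, ENNReal.ofReal (x ^ 2) ∂P := by
    rw [← lintegral_const_mul _ (by fun_prop : Measurable fun x : ℝ => ENNReal.ofReal (x^2))]
    congr 1 with x
    rw [← ENNReal.ofReal_mul (by norm_num)]
    congr 1
    ring
  have hI2'fin : ∫⁻ x, ENNReal.ofReal (x ^ 2 / 2) ∂P < ⊤ := by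
    rw [hhalf]
    exact ENNReal.mul_lt_top ENNReal.ofReal_lt_top hI2fin
  have hI1fin : ∫⁻ x, ENNReal.ofReal x ∂P < ⊤ := by
    have hb : ∀ x : ℝ, ENNReal.ofReal x ≤ ENNReal.ofReal (x ^ 2) + 1 := by
      intro x
      rcases le_or_gt x 1 with h | h
      · calc ENNReal.ofReal x ≤ 1 := by
              simpa using ENNReal.ofReal_le_ofReal h
          _ ≤ _ := le_add_self
      · exact le_trans (ENNReal.ofReal_le_ofReal (by nlinarith)) le_self_add
    calc ∫⁻ x, ENNReal.ofReal x ∂P ≤ ∫⁻ x, (ENNReal.ofReal (x ^ 2) + 1) ∂P :=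
          lintegral_mono hb
      _ = (∫⁻ x, ENNReal.ofReal (x ^ 2) ∂P) + 1 := by
          rw [lintegral_add_right _ measurable_const]; simp
      _ < ⊤ := ENNReal.add_lt_top.mpr ⟨hI2fin, ENNReal.one_lt_top⟩
  -- integrability of pieces
  have hid_int : Integrable (fun v : ℝ => v) P :=
    ⟨measurable_id.aestronglyMeasurable, (hasFiniteIntegral_iff_ofReal hnn).mpr hI1fin⟩
  have hTf_int : Integrable (fun v => T v / f v) P :=
    ⟨hTfm.aestronglyMeasurable, (hasFiniteIntegral_iff_ofReal hTfnn).mpr (by rw [key1, ← lc1]; exact hI1fin)⟩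
  have hg_int : Integrable (fun v => v * (T v / f v)) P :=
    ⟨hgm.aestronglyMeasurable, (hasFiniteIntegral_iff_ofReal hgnn).mpr (by rw [key2, ← lc2]; exact hI2'fin)⟩
  -- real integral identities
  have hint_g : ∫ v, v * (T v / f v) ∂P = (1/2) * ∫ v, v ^ 2 ∂P := by
    rw [integral_eq_lintegral_of_nonneg_ae hgnn hgm.aestronglyMeasurable,
        integral_eq_lintegral_of_nonneg_ae (Filter.Eventually.of_forall fun v => sq_nonneg v)
          (by fun_prop : AEStronglyMeasurable (fun v : ℝ => v ^ 2) P),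
        key2, ← lc2, hhalf, ENNReal.toReal_mul, ENNReal.toReal_ofReal (by norm_num)]
  have hint_Tf : ∫ v, T v / f v ∂P = ∫ v, v ∂P := by
    rw [integral_eq_lintegral_of_nonneg_ae hTfnn hTfm.aestronglyMeasurable,
        integral_eq_lintegral_of_nonneg_ae hnn measurable_id.aestronglyMeasurable,
        key1, ← lc1]
  -- rewrite the goal integrands
  have hrw1 : ∫ v, v * (v - (1 - (P (Set.Iic v)).toReal) / f v) ∂P
      = ∫ v, (v ^ 2 - v * (T v / f v)) ∂P := by
    congr 1 with v
    rw [hsum v]; ring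
  have hrw2 : ∫ v, (v - (1 - (P (Set.Iic v)).toReal) / f v) ∂P
      = ∫ v, (v - T v / f v) ∂P := by
    congr 1 with v
    rw [hsum v]
  have e1 : ∫ v, v * (v - (1 - (P (Set.Iic v)).toReal) / f v) ∂P
      = (∫ v, v ^ 2 ∂P) - ∫ v, v * (T v / f v) ∂P := by
    rw [hrw1, integral_sub hmom hg_int]
  have e2 : ∫ v, (v - (1 - (P (Set.Iic v)).toReal) / f v) ∂P = 0 := by
    rw [hrw2, integral_sub hid_int hTf_int, hint_Tf, sub_self]
  constructor
  · rw [e2, mul_zero, sub_zero]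
  · rw [e1, hint_g]; ring
end

section
/- Let V be a nonnegative random variable with continuous density f, cdf F, mean μ and variance σ², such that F has decreasing hazard rate (f/(1−F) is decreasing). Then Var(ψ(V)) ≤ (1/2)(μ² + σ²), where ψ(v) = v − (1−F(v))/f(v). -/
open MeasureTheory

lemma aux_swap_17 (P : Measure ℝ) [IsFiniteMeasure P] (w : ℝ → ENNReal) (hw : Measurable w) :
    ∫⁻ v in Set.Ici 0, w v * P (Set.Ioi v) ∂volume
      = ∫⁻ u, ∫⁻ v in Set.Ico 0 u, w v ∂volume ∂P := by
  have h1 : ∀ v : ℝ, P (Set.Ioi v) = ∫⁻ u, (Set.Ioi v).indicator 1 u ∂P := by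
    intro v
    rw [lintegral_indicator measurableSet_Ioi]
    simp
  calc ∫⁻ v in Set.Ici 0, w v * P (Set.Ioi v) ∂volume
      = ∫⁻ v in Set.Ici 0, ∫⁻ u, w v * (Set.Ioi v).indicator 1 u ∂P ∂volume := by
        refine lintegral_congr fun v => ?_
        rw [lintegral_const_mul _ (measurable_one.indicator measurableSet_Ioi), ← h1 v]
    _ = ∫⁻ u, ∫⁻ v in Set.Ici 0, w v * (Set.Ioi v).indicator 1 u ∂volume ∂P := by
        refine lintegral_lintegral_swap ?_
        apply Measurable.aemeasurable
        have : (Function.uncurry fun (v u : ℝ) => w v * (Set.Ioi v).indicator 1 u)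
            = fun p : ℝ × ℝ => w p.1 * {q : ℝ × ℝ | q.1 < q.2}.indicator 1 p := by
          ext p
          simp [Function.uncurry, Set.indicator_apply, Set.mem_Ioi]
        rw [this]
        exact (hw.comp measurable_fst).mul
          (measurable_one.indicator (measurableSet_lt measurable_fst measurable_snd))
    _ = ∫⁻ u, ∫⁻ v in Set.Ico 0 u, w v ∂volume ∂P := by
        refine lintegral_congr fun u => ?_
        have : ∀ v : ℝ, w v * (Set.Ioi v).indicator 1 u = (Set.Iio u).indicator w v := by
          intro v
          by_cases h : v < u <;> simp [Set.indicator_apply, Set.mem_Ioi, Set.mem_Iio, h]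
        simp_rw [this]
        rw [lintegral_indicator measurableSet_Iio, Measure.restrict_restrict measurableSet_Iio,
          Set.Iio_inter_Ici]

lemma aux_inner_id_17 {u : ℝ} (hu : 0 ≤ u) :
    ∫⁻ v in Set.Ico 0 u, ENNReal.ofReal v ∂volume = ENNReal.ofReal (u ^ 2 / 2) := by
  have hint : IntegrableOn (fun v : ℝ => v) (Set.Ico 0 u) volume :=
    (intervalIntegrable_iff_integrableOn_Ico_of_le hu).mp
      (intervalIntegral.intervalIntegrable_id)
  rw [← ofReal_integral_eq_lintegral_ofReal hint
      (Filter.eventually_of_mem (self_mem_ae_restrict measurableSet_Ico) (fun x hx => hx.1))]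
  congr 1
  rw [MeasureTheory.integral_Ico_eq_integral_Ioo, ← MeasureTheory.integral_Ioc_eq_integral_Ioo,
    ← intervalIntegral.integral_of_le hu, integral_id]
  ring

/-- Under a decreasing hazard rate, the variance of the virtual valuation
`ψ(v) = v − (1−F(v))/f(v)` satisfies `Var(ψ(V)) ≤ (1/2)(μ² + σ²)`, where `μ` is the
mean and `σ²` the variance of the nonnegative random variable `V` with continuous
density `f` and cdf `F`. -/
theorem stmt_17 (f : ℝ → ℝ) (P : Measure ℝ) [IsProbabilityMeasure P]
    (hP : P = (volume.restrict (Set.Ici (0 : ℝ))).withDensity (fun v => ENNReal.ofReal (f v)))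
    (hfm : Measurable f) (hfcont : ContinuousOn f (Set.Ici (0 : ℝ)))
    (hfpos : ∀ v ∈ Set.Ici (0 : ℝ), 0 < f v)
    (hDHR : AntitoneOn (fun v => f v / (1 - (P (Set.Iic v)).toReal)) (Set.Ici (0 : ℝ)))
    (hmom : Integrable (fun v => v ^ 2) P)
    (μm σ2 : ℝ) (hμ : μm = ∫ v, v ∂P) (hσ : σ2 = ∫ v, (v - μm) ^ 2 ∂P)
    (hψ2 : Integrable (fun v => (v - (1 - (P (Set.Iic v)).toReal) / f v) ^ 2) P) :
    (∫ v, (v - (1 - (P (Set.Iic v)).toReal) / f v) ^ 2 ∂P)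
        - (∫ v, (v - (1 - (P (Set.Iic v)).toReal) / f v) ∂P) ^ 2
      ≤ (1 / 2) * (μm ^ 2 + σ2) := by
  set F : ℝ → ℝ := fun v => (P (Set.Iic v)).toReal with hFdef
  have hFmono : Monotone F := fun a b hab =>
    ENNReal.toReal_mono (measure_ne_top P _) (measure_mono (Set.Iic_subset_Iic.mpr hab))
  have hFm : Measurable F := hFmono.measurable
  have haeP : ∀ᵐ u ∂P, 0 ≤ u := by
    rw [ae_iff]
    have h0 : {u : ℝ | ¬ 0 ≤ u} = Set.Iio 0 := by ext u; simp
    rw [h0, hP, withDensity_apply _ measurableSet_Iio,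
      Measure.restrict_restrict measurableSet_Iio, Set.Iio_inter_Ici, Set.Ico_self,
      Measure.restrict_empty, lintegral_zero_measure]
  have hIoi : ∀ v : ℝ, P (Set.Ioi v) = ENNReal.ofReal (1 - F v) := by
    intro v
    have hc : P (Set.Ioi v) = 1 - P (Set.Iic v) := by
      rw [← Set.compl_Iic, measure_compl measurableSet_Iic (measure_ne_top P _), measure_univ]
    rw [hc, ENNReal.ofReal_sub _ ENNReal.toReal_nonneg, ENNReal.ofReal_one,
      ENNReal.ofReal_toReal (measure_ne_top P _)]
  have hpos : ∀ v : ℝ, 0 ≤ v → 0 < 1 - F v := by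
    intro v hv
    have hne : P (Set.Ioi v) ≠ 0 := by
      have hss : Set.Ioi v ∩ Set.Ici 0 = Set.Ioi v :=
        Set.inter_eq_left.mpr (fun x hx => le_trans hv hx.le)
      rw [hP, withDensity_apply _ measurableSet_Ioi,
        Measure.restrict_restrict measurableSet_Ioi, hss]
      intro h0
      have haezero := (lintegral_eq_zero_iff hfm.ennreal_ofReal).mp h0
      have hfalse : ∀ᵐ x ∂(volume.restrict (Set.Ioi v)), False := by
        filter_upwards [haezero, ae_restrict_mem measurableSet_Ioi] with x h1 h2
        exact absurd h1 (ENNReal.ofReal_pos.mpr (hfpos x (le_trans hv h2.le))).ne'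
      have := ae_iff.mp hfalse
      simp only [not_false_iff, Set.setOf_true, Measure.restrict_apply_univ] at this
      simp [Real.volume_Ioi] at this
    have hlt : P (Set.Iic v) < 1 := by
      rcases lt_or_eq_of_le (prob_le_one (μ := P) (s := Set.Iic v)) with h | h
      · exact h
      · exfalso
        apply hne
        rw [← Set.compl_Iic, measure_compl measurableSet_Iic (measure_ne_top P _), measure_univ, h]
        simp
    have hFlt : F v < 1 := by
      have := (ENNReal.toReal_lt_toReal (measure_ne_top P _) (by simp)).mpr hlt
      simpa using this
    linarith
  have hDHR' : AntitoneOn (fun v => f v / (1 - F v)) (Set.Ici (0 : ℝ)) := hDHR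
  set g : ℝ → ℝ := fun v => (1 - F v) / f v with hgdef
  have hgm : Measurable g := (measurable_const.sub hFm).div hfm
  have hg_nonneg : ∀ v : ℝ, 0 ≤ v → 0 ≤ g v := fun v hv =>
    div_nonneg (hpos v hv).le (hfpos v hv).le
  have hg_mono : MonotoneOn g (Set.Ici (0 : ℝ)) := by
    intro a ha b hb hab
    have hinva : g a = 1 / (f a / (1 - F a)) := by rw [one_div_div]
    have hinvb : g b = 1 / (f b / (1 - F b)) := by rw [one_div_div]
    rw [hinva, hinvb]
    exact one_div_le_one_div_of_le (div_pos (hfpos b hb) (hpos b hb)) (hDHR' ha hb hab)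
  have htrans : ∀ k : ℝ → ENNReal, Measurable k →
      ∫⁻ u, k u ∂P = ∫⁻ v in Set.Ici 0, ENNReal.ofReal (f v) * k v ∂volume := by
    intro k hk
    rw [hP, lintegral_withDensity_eq_lintegral_mul _ hfm.ennreal_ofReal hk]
    rfl
  have hgf : ∀ v : ℝ, 0 ≤ v → g v * f v = 1 - F v := fun v hv =>
    div_mul_cancel₀ _ (hfpos v hv).ne'
  -- finiteness of the second moment, in ENNReal form
  have hC_ne : (∫⁻ u, ENNReal.ofReal (u ^ 2) ∂P) ≠ ⊤ := by
    have h := (hasFiniteIntegral_iff_ofReal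
      (Filter.Eventually.of_forall fun u => sq_nonneg u)).mp hmom.hasFiniteIntegral
    exact h.ne
  -- the B quantity
  have hBeq : (∫⁻ u, ENNReal.ofReal (u * g u) ∂P) = ∫⁻ u, ENNReal.ofReal (u ^ 2 / 2) ∂P := by
    calc (∫⁻ u, ENNReal.ofReal (u * g u) ∂P)
        = ∫⁻ v in Set.Ici 0, ENNReal.ofReal (f v) * ENNReal.ofReal (v * g v) ∂volume :=
          htrans _ (ENNReal.measurable_ofReal.comp (measurable_id.mul hgm))
      _ = ∫⁻ v in Set.Ici 0, ENNReal.ofReal v * P (Set.Ioi v) ∂volume := by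
          refine lintegral_congr_ae ?_
          filter_upwards [ae_restrict_mem measurableSet_Ici] with v hv
          rw [hIoi v, ← ENNReal.ofReal_mul (hfpos v hv).le, ← ENNReal.ofReal_mul hv]
          congr 1
          rw [← hgf v hv]
          ring
      _ = ∫⁻ u, ∫⁻ v in Set.Ico 0 u, ENNReal.ofReal v ∂volume ∂P :=
          aux_swap_17 P _ ENNReal.measurable_ofReal
      _ = ∫⁻ u, ENNReal.ofReal (u ^ 2 / 2) ∂P := by
          refine lintegral_congr_ae ?_
          filter_upwards [haeP] with u hu
          exact aux_inner_id_17 hu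
  have hB_le_C : (∫⁻ u, ENNReal.ofReal (u * g u) ∂P) ≤ ∫⁻ u, ENNReal.ofReal (u ^ 2) ∂P := by
    rw [hBeq]
    refine lintegral_mono fun u => ENNReal.ofReal_le_ofReal ?_
    nlinarith [sq_nonneg u]
  have hB_ne : (∫⁻ u, ENNReal.ofReal (u * g u) ∂P) ≠ ⊤ := (lt_of_le_of_lt hB_le_C hC_ne.lt_top).ne
  -- the A quantity
  have hAB : (∫⁻ u, ENNReal.ofReal (g u ^ 2) ∂P) ≤ ∫⁻ u, ENNReal.ofReal (u * g u) ∂P := by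
    have hAeq : (∫⁻ u, ENNReal.ofReal (g u ^ 2) ∂P)
        = ∫⁻ u, ∫⁻ v in Set.Ico 0 u, ENNReal.ofReal (g v) ∂volume ∂P := by
      calc (∫⁻ u, ENNReal.ofReal (g u ^ 2) ∂P)
          = ∫⁻ v in Set.Ici 0, ENNReal.ofReal (f v) * ENNReal.ofReal (g v ^ 2) ∂volume :=
            htrans _ (ENNReal.measurable_ofReal.comp (hgm.pow_const 2))
        _ = ∫⁻ v in Set.Ici 0, ENNReal.ofReal (g v) * P (Set.Ioi v) ∂volume := by
            refine lintegral_congr_ae ?_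
            filter_upwards [ae_restrict_mem measurableSet_Ici] with v hv
            rw [hIoi v, ← ENNReal.ofReal_mul (hfpos v hv).le,
              ← ENNReal.ofReal_mul (hg_nonneg v hv)]
            congr 1
            rw [← hgf v hv]
            ring
        _ = ∫⁻ u, ∫⁻ v in Set.Ico 0 u, ENNReal.ofReal (g v) ∂volume ∂P :=
            aux_swap_17 P _ (ENNReal.measurable_ofReal.comp hgm)
    rw [hAeq]
    refine lintegral_mono_ae ?_
    filter_upwards [haeP] with u hu
    calc (∫⁻ v in Set.Ico 0 u, ENNReal.ofReal (g v) ∂volume)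
        ≤ ∫⁻ _ in Set.Ico 0 u, ENNReal.ofReal (g u) ∂volume :=
          setLIntegral_mono measurable_const
            (fun v hv => ENNReal.ofReal_le_ofReal (hg_mono hv.1 hu hv.2.le))
      _ = ENNReal.ofReal (g u) * volume (Set.Ico 0 u) := setLIntegral_const _ _
      _ = ENNReal.ofReal (g u) * ENNReal.ofReal u := by rw [Real.volume_Ico, sub_zero]
      _ = ENNReal.ofReal (u * g u) := by
          rw [mul_comm (u : ℝ), ENNReal.ofReal_mul (hg_nonneg u hu)]
  have hA_ne : (∫⁻ u, ENNReal.ofReal (g u ^ 2) ∂P) ≠ ⊤ := (lt_of_le_of_lt hAB hB_ne.lt_top).ne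
  -- real-valued integrals
  have hCreal : ∫ u, u ^ 2 ∂P = (∫⁻ u, ENNReal.ofReal (u ^ 2) ∂P).toReal :=
    integral_eq_lintegral_of_nonneg_ae (Filter.Eventually.of_forall fun u => sq_nonneg u)
      hmom.1
  have hugnn : ∀ᵐ u ∂P, 0 ≤ u * g u := by
    filter_upwards [haeP] with u hu
    exact mul_nonneg hu (hg_nonneg u hu)
  have hugm : AEStronglyMeasurable (fun u => u * g u) P :=
    (measurable_id.mul hgm).aestronglyMeasurable
  have hBreal : ∫ u, u * g u ∂P = (∫⁻ u, ENNReal.ofReal (u * g u) ∂P).toReal :=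
    integral_eq_lintegral_of_nonneg_ae hugnn hugm
  have hAreal : ∫ u, g u ^ 2 ∂P = (∫⁻ u, ENNReal.ofReal (g u ^ 2) ∂P).toReal :=
    integral_eq_lintegral_of_nonneg_ae (Filter.Eventually.of_forall fun u => sq_nonneg _)
      (hgm.pow_const 2).aestronglyMeasurable
  have hInt_ug : Integrable (fun u => u * g u) P :=
    ⟨hugm, (hasFiniteIntegral_iff_ofReal hugnn).mpr hB_ne.lt_top⟩
  have hInt_g2 : Integrable (fun u => g u ^ 2) P :=
    ⟨(hgm.pow_const 2).aestronglyMeasurable,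
      (hasFiniteIntegral_iff_ofReal (Filter.Eventually.of_forall fun u => sq_nonneg _)).mpr
        hA_ne.lt_top⟩
  -- half moment identity
  have hhalf : ∫ u, u * g u ∂P = (1 / 2) * ∫ u, u ^ 2 ∂P := by
    have e2 : ∫ u, u ^ 2 / 2 ∂P = (∫⁻ u, ENNReal.ofReal (u ^ 2 / 2) ∂P).toReal :=
      integral_eq_lintegral_of_nonneg_ae
        (Filter.Eventually.of_forall fun u => by positivity)
        ((measurable_id.pow_const 2).div_const 2).aestronglyMeasurable
    have e3 : ∫ u, u ^ 2 / 2 ∂P = (1 / 2) * ∫ u, u ^ 2 ∂P := by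
      rw [integral_div]
      ring
    rw [hBreal, hBeq, ← e2, e3]
  -- expansion of ψ²
  have hexp : ∫ u, (u - g u) ^ 2 ∂P
      = ∫ u, u ^ 2 ∂P - 2 * ∫ u, u * g u ∂P + ∫ u, g u ^ 2 ∂P := by
    have hfun : (fun u => (u - g u) ^ 2) = fun u => (u ^ 2 - 2 * (u * g u)) + g u ^ 2 := by
      ext u; ring
    have h1 : Integrable (fun u => u ^ 2 - 2 * (u * g u)) P := hmom.sub (hInt_ug.const_mul 2)
    have h2 : Integrable (fun u => 2 * (u * g u)) P := hInt_ug.const_mul 2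
    rw [hfun, integral_add h1 hInt_g2, integral_sub hmom h2, integral_const_mul]
  -- variance identity
  have hIntv : Integrable (fun v : ℝ => v) P := by
    refine Integrable.mono' ((integrable_const (1 : ℝ)).add hmom)
      measurable_id.aestronglyMeasurable (Filter.Eventually.of_forall fun v => ?_)
    have : |v| ≤ 1 + v ^ 2 := by nlinarith [abs_nonneg v, sq_abs v, sq_nonneg (|v| - 1)]
    simpa using this
  have hvar : μm ^ 2 + σ2 = ∫ u, u ^ 2 ∂P := by
    have hfun : (fun v : ℝ => (v - μm) ^ 2)
        = fun v => (v ^ 2 - (2 * μm) * v) + μm ^ 2 := by ext v; ring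
    have h1 : Integrable (fun v : ℝ => v ^ 2 - 2 * μm * v) P := hmom.sub (hIntv.const_mul _)
    have h2 : Integrable (fun v : ℝ => 2 * μm * v) P := hIntv.const_mul _
    rw [hσ, hfun, integral_add h1 (integrable_const _), integral_sub hmom h2,
      integral_const_mul, integral_const, probReal_univ, ← hμ]
    simp
    ring
  -- conclusion
  calc (∫ v, (v - g v) ^ 2 ∂P) - (∫ v, (v - g v) ∂P) ^ 2
      ≤ ∫ v, (v - g v) ^ 2 ∂P := sub_le_self _ (sq_nonneg _)
    _ = ∫ u, g u ^ 2 ∂P := by rw [hexp, hhalf]; ring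
    _ = (∫⁻ u, ENNReal.ofReal (g u ^ 2) ∂P).toReal := hAreal
    _ ≤ (∫⁻ u, ENNReal.ofReal (u * g u) ∂P).toReal := ENNReal.toReal_mono hB_ne hAB
    _ = ∫ u, u * g u ∂P := hBreal.symm
    _ = (1 / 2) * ∫ u, u ^ 2 ∂P := hhalf
    _ = (1 / 2) * (μm ^ 2 + σ2) := by rw [hvar]
end
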